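/- arXiv:1610.02849 — 4 statements merged into one kernel-verified Lean document; each statement's English description precedes it below -/
import Mathlib

section
/- Let $n, n_c$ be positive integers. Let $M_b \in \mathbb{R}^{6\times 6}$ and $M_j \in \mathbb{R}^{n\times n}$ be invertible matrices, $J_b \in \mathbb{R}^{6n_c\times 6}$, $J_j \in \mathbb{R}^{6n_c\times n}$, and $N_b \in \mathbb{R}^{6n_c\times 6n_c}$ a matrix with $J_b^\top N_b = 0$. Set $\Lambda := J_j M_j^{-1} \in \mathbb{R}^{6n_c\times n}$, and let $\Lambda^\dagger \in \mathbb{R}^{n\times 6n_c}$ and $N_\Lambda \in \mathbb{R}^{n\times n}$ be matrices satisfying $\Lambda^\dagger \Lambda = 1_n - N_\Lambda$. Then $J_j^\top N_b - \Lambda^\dagger (J_b M_b^{-1} J_b^\top + J_j M_j^{-1} J_j^\top) N_b - N_\Lambda J_j^\top N_b = 0$. (Consequently, the closed-loop joint space acceleration of the momentum-based balancing controller does not depend on the contact-wrench redundancy $f_0$.) -/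
open Matrix

/-- the closed-loop joint space dynamics does not depend on the
contact-wrench redundancy `f₀` (algebraic core of Lemma 1). -/
theorem stmt_0 (n n_c : ℕ) (hn : 0 < n) (hnc : 0 < n_c)
    (Mb : Matrix (Fin 6) (Fin 6) ℝ) (Mj : Matrix (Fin n) (Fin n) ℝ)
    (hMb : IsUnit Mb.det) (hMj : IsUnit Mj.det)
    (Jb : Matrix (Fin (6 * n_c)) (Fin 6) ℝ)
    (Jj : Matrix (Fin (6 * n_c)) (Fin n) ℝ)
    (Nb : Matrix (Fin (6 * n_c)) (Fin (6 * n_c)) ℝ)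
    (hNb : Jbᵀ * Nb = 0)
    (Λ : Matrix (Fin (6 * n_c)) (Fin n) ℝ) (hΛ : Λ = Jj * Mj⁻¹)
    (Λdag : Matrix (Fin n) (Fin (6 * n_c)) ℝ)
    (NΛ : Matrix (Fin n) (Fin n) ℝ)
    (hΛdag : Λdag * Λ = 1 - NΛ) :
    Jjᵀ * Nb - Λdag * (Jb * Mb⁻¹ * Jbᵀ + Jj * Mj⁻¹ * Jjᵀ) * Nb - NΛ * Jjᵀ * Nb = 0 := by
  subst hΛ
  have h1 : Λdag * (Jb * Mb⁻¹ * Jbᵀ) * Nb = 0 := by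
    calc Λdag * (Jb * Mb⁻¹ * Jbᵀ) * Nb = Λdag * (Jb * Mb⁻¹) * (Jbᵀ * Nb) := by
          simp [Matrix.mul_assoc]
      _ = 0 := by rw [hNb, Matrix.mul_zero]
  have h2 : Λdag * (Jj * Mj⁻¹ * Jjᵀ) * Nb = (1 - NΛ) * (Jjᵀ * Nb) := by
    calc Λdag * (Jj * Mj⁻¹ * Jjᵀ) * Nb = (Λdag * (Jj * Mj⁻¹)) * (Jjᵀ * Nb) := by
          simp [Matrix.mul_assoc]
      _ = (1 - NΛ) * (Jjᵀ * Nb) := by rw [hΛdag]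
  have : Λdag * (Jb * Mb⁻¹ * Jbᵀ + Jj * Mj⁻¹ * Jjᵀ) * Nb
      = (1 - NΛ) * (Jjᵀ * Nb) := by
    rw [Matrix.mul_add, Matrix.add_mul, h1, h2, zero_add]
  rw [this]
  rw [Matrix.sub_mul, Matrix.one_mul, Matrix.mul_assoc]
  abel
end

section
/- Let $n, n_c$ be positive integers. Let $M_b \in \mathbb{R}^{6\times 6}$ and $M_j \in \mathbb{R}^{n\times n}$ be invertible, and set $M := \mathrm{blockdiag}(M_b, M_j) \in \mathbb{R}^{(6+n)\times(6+n)}$, $B := \begin{bmatrix} 0_{6\times n} \\ 1_n\end{bmatrix}$, $J := [J_b \ J_j] \in \mathbb{R}^{6n_c \times (6+n)}$ with $J_b \in \mathbb{R}^{6n_c\times 6}$, $J_j \in \mathbb{R}^{6n_c\times n}$, and $\Lambda := J_j M_j^{-1}$. Suppose $\Lambda^\dagger \in \mathbb{R}^{n\times 6n_c}$ and $N_\Lambda \in \mathbb{R}^{n\times n}$ satisfy $\Lambda \Lambda^\dagger = 1_{6n_c}$ and $\Lambda N_\Lambda = 0$. Then for any vectors $h \in \mathbb{R}^{6+n}$,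 $f \in \mathbb{R}^{6n_c}$, $c \in \mathbb{R}^{6n_c}$, $\tau_0 \in \mathbb{R}^n$, setting $\tau := \Lambda^\dagger (J M^{-1}(h - J^\top f) - c) + N_\Lambda \tau_0$ and $\dot\nu := M^{-1}(B\tau + J^\top f - h)$, one has $J \dot\nu + c = 0$. -/
open Matrix

/-!
The body coordinates are unactuated and `M` is block diagonal, so `J M⁻¹ B = J_j M_j⁻¹ = Λ`.
Hence the torque enters the contact acceleration `J ν̇` only through `Λ τ`, where `Λ Λ† = 1`
reproduces the commanded term and `Λ N_Λ = 0` annihilates the null-space torque `τ₀`; what is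
left cancels against `J M⁻¹ (J^T f - h)`.
-/

namespace Matrix

variable {m n p R : Type*}

theorem inv_fromBlocks_zero_zero [Fintype n] [Fintype p] [DecidableEq n] [DecidableEq p]
    [CommRing R] {A : Matrix n n R} {D : Matrix p p R}
    (hA : IsUnit A.det) (hD : IsUnit D.det) :
    (fromBlocks A 0 0 D)⁻¹ = fromBlocks A⁻¹ 0 0 D⁻¹ := by
  rw [inv_fromBlocks_zero₂₁_of_isUnit_iff _ _ _
      ⟨fun _ ↦ (isUnit_iff_isUnit_det D).2 hD, fun _ ↦ (isUnit_iff_isUnit_det A).2 hA⟩,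
    Matrix.mul_zero, Matrix.zero_mul, neg_zero]

theorem fromCols_mul_inv_fromBlocks_mul_fromRows_zero_one [Fintype n] [Fintype p]
    [DecidableEq n] [DecidableEq p] [CommRing R]
    (X : Matrix m n R) (Y : Matrix m p R) {A : Matrix n n R} {D : Matrix p p R}
    (hA : IsUnit A.det) (hD : IsUnit D.det) :
    fromCols X Y * (fromBlocks A 0 0 D)⁻¹ * fromRows (0 : Matrix n p R) (1 : Matrix p p R) =
      Y * D⁻¹ := by
  rw [inv_fromBlocks_zero_zero hA hD, fromCols_mul_fromBlocks, fromCols_mul_fromRows]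
  simp

theorem mulVec_mulVec_rightInverse_add_nullSpace_sub_add_eq_zero [Fintype m] [Fintype n]
    [Fintype p] [DecidableEq m] [Ring R]
    (A : Matrix m p R) (B : Matrix p n R) (Gdag : Matrix n m R) (N : Matrix n n R)
    (hGdag : A * B * Gdag = 1) (hN : A * B * N = 0) (x : p → R) (c : m → R) (τ₀ : n → R) :
    A *ᵥ (B *ᵥ (Gdag *ᵥ (A *ᵥ x - c) + N *ᵥ τ₀) - x) + c = 0 := by
  have hτ : A *ᵥ (B *ᵥ (Gdag *ᵥ (A *ᵥ x - c) + N *ᵥ τ₀)) = A *ᵥ x - c := by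
    rw [mulVec_mulVec, mulVec_add, mulVec_mulVec, mulVec_mulVec, hGdag, hN, one_mulVec,
      zero_mulVec, add_zero]
  rw [mulVec_sub, hτ, sub_sub_cancel_left, neg_add_cancel]

end Matrix

theorem stmt_1_general (n n_c : ℕ)
    (Mb : Matrix (Fin 6) (Fin 6) ℝ) (Mj : Matrix (Fin n) (Fin n) ℝ)
    (hMb : IsUnit Mb.det) (hMj : IsUnit Mj.det)
    (Jb : Matrix (Fin (6 * n_c)) (Fin 6) ℝ)
    (Jj : Matrix (Fin (6 * n_c)) (Fin n) ℝ)
    (M : Matrix (Fin 6 ⊕ Fin n) (Fin 6 ⊕ Fin n) ℝ)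
    (hM : M = Matrix.fromBlocks Mb 0 0 Mj)
    (B : Matrix (Fin 6 ⊕ Fin n) (Fin n) ℝ)
    (hB : B = Matrix.fromRows (0 : Matrix (Fin 6) (Fin n) ℝ) (1 : Matrix (Fin n) (Fin n) ℝ))
    (J : Matrix (Fin (6 * n_c)) (Fin 6 ⊕ Fin n) ℝ)
    (hJ : J = Matrix.fromCols Jb Jj)
    (Λ : Matrix (Fin (6 * n_c)) (Fin n) ℝ) (hΛ : Λ = Jj * Mj⁻¹)
    (Λdag : Matrix (Fin n) (Fin (6 * n_c)) ℝ)
    (NΛ : Matrix (Fin n) (Fin n) ℝ)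
    (hΛdag : Λ * Λdag = 1) (hNΛ : Λ * NΛ = 0)
    (h : (Fin 6 ⊕ Fin n) → ℝ) (f : Fin (6 * n_c) → ℝ)
    (c : Fin (6 * n_c) → ℝ) (τ0 : Fin n → ℝ)
    (τ : Fin n → ℝ)
    (hτ : τ = Λdag *ᵥ (J *ᵥ (M⁻¹ *ᵥ (h - Jᵀ *ᵥ f)) - c) + NΛ *ᵥ τ0)
    (ν' : (Fin 6 ⊕ Fin n) → ℝ)
    (hν' : ν' = M⁻¹ *ᵥ (B *ᵥ τ + Jᵀ *ᵥ f - h)) :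
    J *ᵥ ν' + c = 0 := by
  have hJMB : J * M⁻¹ * B = Λ := by
    rw [hJ, hM, hB, hΛ]
    exact fromCols_mul_inv_fromBlocks_mul_fromRows_zero_one Jb Jj hMb hMj
  rw [← hJMB] at hΛdag hNΛ
  have hlaw := mulVec_mulVec_rightInverse_add_nullSpace_sub_add_eq_zero (J * M⁻¹) B Λdag NΛ
    hΛdag hNΛ (h - Jᵀ *ᵥ f) c τ0
  rw [hν', hτ, mulVec_mulVec, mulVec_mulVec, ← hlaw, sub_sub_eq_add_sub, add_sub_right_comm]

/-- the torque control law realizes contact wrenches while satisfying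
the rigid contact acceleration constraint `J ν̇ + c = 0`. -/
theorem stmt_1 (n n_c : ℕ) (hn : 0 < n) (hnc : 0 < n_c)
    (Mb : Matrix (Fin 6) (Fin 6) ℝ) (Mj : Matrix (Fin n) (Fin n) ℝ)
    (hMb : IsUnit Mb.det) (hMj : IsUnit Mj.det)
    (Jb : Matrix (Fin (6 * n_c)) (Fin 6) ℝ)
    (Jj : Matrix (Fin (6 * n_c)) (Fin n) ℝ)
    (M : Matrix (Fin 6 ⊕ Fin n) (Fin 6 ⊕ Fin n) ℝ)
    (hM : M = Matrix.fromBlocks Mb 0 0 Mj)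
    (B : Matrix (Fin 6 ⊕ Fin n) (Fin n) ℝ)
    (hB : B = Matrix.fromRows (0 : Matrix (Fin 6) (Fin n) ℝ) (1 : Matrix (Fin n) (Fin n) ℝ))
    (J : Matrix (Fin (6 * n_c)) (Fin 6 ⊕ Fin n) ℝ)
    (hJ : J = Matrix.fromCols Jb Jj)
    (Λ : Matrix (Fin (6 * n_c)) (Fin n) ℝ) (hΛ : Λ = Jj * Mj⁻¹)
    (Λdag : Matrix (Fin n) (Fin (6 * n_c)) ℝ)
    (NΛ : Matrix (Fin n) (Fin n) ℝ)
    (hΛdag : Λ * Λdag = 1) (hNΛ : Λ * NΛ = 0)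
    (h : (Fin 6 ⊕ Fin n) → ℝ) (f : Fin (6 * n_c) → ℝ)
    (c : Fin (6 * n_c) → ℝ) (τ0 : Fin n → ℝ)
    (τ : Fin n → ℝ)
    (hτ : τ = Λdag *ᵥ (J *ᵥ (M⁻¹ *ᵥ (h - Jᵀ *ᵥ f)) - c) + NΛ *ᵥ τ0)
    (ν' : (Fin 6 ⊕ Fin n) → ℝ)
    (hν' : ν' = M⁻¹ *ᵥ (B *ᵥ τ + Jᵀ *ᵥ f - h)) :
    J *ᵥ ν' + c = 0 :=
  stmt_1_general n n_c Mb Mj hMb hMj Jb Jj M hM B hB J hJ Λ hΛ Λdag NΛ hΛdag hNΛ h f c τ0 τ hτ ν'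
    hν'
end

section
/- Let $m$ be a positive integer, $K^* \in \mathbb{R}^{m\times m}$ an arbitrary matrix, $O \in \mathbb{R}^{m\times m}$ orthogonal, $L \in \mathbb{R}^{m\times m}$ real diagonal, and $K_U \in \mathbb{R}^{m\times m}$ a diagonal matrix. Define $X := O^\top \exp(L) O$, $B_1 := \exp(L) - O K^* O^\top$, and $U := -K_U \exp(-L)\, \mathrm{diag}(B_1)$, where $\mathrm{diag}(B)$ denotes the diagonal matrix with entries $\mathrm{diag}(B)_{ii} = B_{ii}$ and zero off-diagonal. Then $\mathrm{tr}\big((K^* - X)^\top O^\top \exp(L)\, U\, O\big) = \sum_{i=1}^m (K_U)_{ii} (B_1)_{ii}^2$. In particular, if $K_U$ has nonnegative diagonal entries, this trace is nonnegative. -/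
/-! Conjugation by the orthogonal `O` turns `(K* - X)ᵀ` into `-B₁ᵀ`, and since `L` and `K_U` are diagonal
they commute, so `exp L * U = -K_U * diag B₁`. By cyclicity the trace becomes
`tr (K_U * diag B₁ * B₁ᵀ) = ∑ i, (K_U)ᵢᵢ (B₁)ᵢᵢ²`. -/

open Matrix

namespace Matrix

variable {n R : Type*} [Fintype n] [DecidableEq n]

theorem IsDiag.commute [CommSemiring R] {A B : Matrix n n R} (hA : A.IsDiag) (hB : B.IsDiag) :
    Commute A B := by
  rw [← hA.diagonal_diag, ← hB.diagonal_diag]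
  exact commute_diagonal _ _

theorem exp_mul_mul_exp_neg_of_commute [NormedCommRing R] [NormedAlgebra ℚ R] [CompleteSpace R]
    {A K : Matrix n n R} (h : Commute A K) : NormedSpace.exp A * K * NormedSpace.exp (-A) = K := by
  rw [h.exp_left.eq, mul_assoc, ← exp_add_of_commute _ _ (Commute.refl A).neg_right,
    add_neg_cancel, NormedSpace.exp_zero, mul_one]

theorem conj_mul_transpose_sub_conj_transpose [CommRing R] {O : Matrix n n R} (hO : O * Oᵀ = 1)
    (K E : Matrix n n R) : O * (K - Oᵀ * E * O)ᵀ * Oᵀ = -(E - O * K * Oᵀ)ᵀ := by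
  have hconj : O * (Oᵀ * E * O)ᵀ * Oᵀ = Eᵀ := by
    simp only [transpose_mul, transpose_transpose, ← mul_assoc, hO, one_mul]
    rw [mul_assoc, hO, mul_one]
  rw [transpose_sub, mul_sub, sub_mul, hconj, transpose_sub, neg_sub]
  simp only [transpose_mul, transpose_transpose, mul_assoc]

theorem IsDiag.trace_mul_diagonal_diag_mul_transpose [CommSemiring R] {K : Matrix n n R}
    (hK : K.IsDiag) (B : Matrix n n R) :
    trace (K * diagonal B.diag * Bᵀ) = ∑ i, K i i * B i i ^ 2 := by
  rw [← hK.diagonal_diag, diagonal_mul_diagonal]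
  simp [trace, diagonal_mul, sq, mul_assoc]

end Matrix

theorem stmt_11_general (m : ℕ)
    (Kstar : Matrix (Fin m) (Fin m) ℝ)
    (O : Matrix (Fin m) (Fin m) ℝ) (hO : O * Oᵀ = 1)
    (L : Matrix (Fin m) (Fin m) ℝ) (hL : L.IsDiag)
    (KU : Matrix (Fin m) (Fin m) ℝ) (hKU : KU.IsDiag)
    (X : Matrix (Fin m) (Fin m) ℝ) (hX : X = Oᵀ * NormedSpace.exp L * O)
    (B1 : Matrix (Fin m) (Fin m) ℝ) (hB1 : B1 = NormedSpace.exp L - O * Kstar * Oᵀ)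
    (U : Matrix (Fin m) (Fin m) ℝ)
    (hU : U = -(KU * NormedSpace.exp (-L) * Matrix.diagonal B1.diag)) :
    ((Kstar - X)ᵀ * (Oᵀ * NormedSpace.exp L * U * O)).trace =
        ∑ i, KU i i * (B1 i i) ^ 2 ∧
      ((∀ i, 0 ≤ KU i i) →
        0 ≤ ((Kstar - X)ᵀ * (Oᵀ * NormedSpace.exp L * U * O)).trace) := by
  have hEU : NormedSpace.exp L * U = -(KU * diagonal B1.diag) := by
    rw [hU, mul_neg, ← mul_assoc, ← mul_assoc, exp_mul_mul_exp_neg_of_commute (hL.commute hKU)]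
  have hconj : O * (Kstar - X)ᵀ * Oᵀ = -B1ᵀ := by
    rw [hX, hB1, conj_mul_transpose_sub_conj_transpose hO]
  have htrace : ((Kstar - X)ᵀ * (Oᵀ * NormedSpace.exp L * U * O)).trace =
      ∑ i, KU i i * (B1 i i) ^ 2 :=
    calc ((Kstar - X)ᵀ * (Oᵀ * NormedSpace.exp L * U * O)).trace
        = (O * (Kstar - X)ᵀ * Oᵀ * (NormedSpace.exp L * U)).trace := by
          simp only [← mul_assoc]
          rw [trace_mul_comm]
          simp only [← mul_assoc]
      _ = (KU * diagonal B1.diag * B1ᵀ).trace := by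
          rw [hconj, hEU, neg_mul_neg, trace_mul_comm]
      _ = ∑ i, KU i i * (B1 i i) ^ 2 := hKU.trace_mul_diagonal_diag_mul_transpose B1
  exact ⟨htrace, fun hKU_nonneg =>
    htrace ▸ Finset.sum_nonneg fun i _ => mul_nonneg (hKU_nonneg i) (sq_nonneg _)⟩

/-- the diagonal-control trace identity used in the Lyapunov
analysis of Lemma 3. -/
theorem stmt_11 (m : ℕ) (hm : 0 < m)
    (Kstar : Matrix (Fin m) (Fin m) ℝ)
    (O : Matrix (Fin m) (Fin m) ℝ) (hO : O * Oᵀ = 1)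
    (L : Matrix (Fin m) (Fin m) ℝ) (hL : L.IsDiag)
    (KU : Matrix (Fin m) (Fin m) ℝ) (hKU : KU.IsDiag)
    (X : Matrix (Fin m) (Fin m) ℝ) (hX : X = Oᵀ * NormedSpace.exp L * O)
    (B1 : Matrix (Fin m) (Fin m) ℝ) (hB1 : B1 = NormedSpace.exp L - O * Kstar * Oᵀ)
    (U : Matrix (Fin m) (Fin m) ℝ)
    (hU : U = -(KU * NormedSpace.exp (-L) * Matrix.diagonal B1.diag)) :
    ((Kstar - X)ᵀ * (Oᵀ * NormedSpace.exp L * U * O)).trace =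
        ∑ i, KU i i * (B1 i i) ^ 2 ∧
      ((∀ i, 0 ≤ KU i i) →
        0 ≤ ((Kstar - X)ᵀ * (Oᵀ * NormedSpace.exp L * U * O)).trace) :=
  stmt_11_general m Kstar O hO L hL KU hKU X hX B1 hB1 U hU
end

section
/- Under the hypotheses of the tracker trajectory statement (i.e., $O, L : [0,\infty) \to \mathbb{R}^{m\times m}$ differentiable with $L(t)$ diagonal, $O(t)$ orthogonal, $\dot L(t) = U(t)$, $\dot O(t) = O(t)\Omega(t)$, where $X(t) = O(t)^\top \exp(L(t)) O(t)$, $B_1(t) = \exp(L(t)) - O(t) K^* O(t)^\top$, $B_2(t) = X(t) K^{*\top} - K^{*\top} X(t)$, $U(t) = -K_U \exp(-L(t))\,\mathrm{diag}(B_1(t))$ with $K_U$ diagonal with nonnegative entries, and $\Omega(t) = \mathcal{K}((B_2(t)-B_2(t)^\top)/2)$ with $\mathcal{K}$ linear, skew-preserving, and positive semidefinite for the Frobenius inner product), suppose in addition that $K^*$ is symmetric and that $X(0) = K^*$. Then $X(t) = K^*$ for all $t \ge 0$; that is, the equilibrium $\tilde K = K^* - X = 0$ is invariant under the tracker dynamics.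 -/
/-! The squared Frobenius distance `V = tr((K* - X)ᵀ (K* - X))` is a Lyapunov function for the
tracker: along trajectories `-V'/2 = tr(B₂ᵀ 𝒦 B₂) + ∑ᵢ (K_U)ᵢᵢ (B₁)ᵢᵢ²`, the first term coming from
the rotation `Ȯ = OΩ` and the second from the diagonal flow `L̇ = U`, and both are nonnegative.
So `V` is nonincreasing on `[0, ∞)`; it is nonnegative and starts at `0`, hence stays `0`. -/

open Matrix

attribute [local instance] Matrix.frobeniusNormedAddCommGroup Matrix.frobeniusNormedSpace
  Matrix.frobeniusNormedRing Matrix.frobeniusNormedAlgebra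

namespace Matrix

variable {n : Type*} [Fintype n]

theorem trace_mul_transpose_mul_add_mul_mul_of_skew {R : Type*} [CommRing R]
    {Ω : Matrix n n R} (hΩ : Ωᵀ = -Ω) (A X : Matrix n n R) :
    (A * (Ωᵀ * X + X * Ω)).trace = ((A * X - X * A) * Ω).trace := by
  rw [hΩ, mul_add, trace_add, sub_mul, trace_sub, neg_mul, mul_neg, trace_neg,
    ← mul_assoc, ← mul_assoc, trace_mul_cycle]
  ring

theorem trace_transpose_mul_self_nonneg {m : Type*} [Fintype m] (A : Matrix m n ℝ) :
    0 ≤ (Aᵀ * A).trace := by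
  simpa using (posSemidef_conjTranspose_mul_self A).trace_nonneg

theorem trace_transpose_mul_self_eq_zero_iff {m : Type*} [Fintype m] {A : Matrix m n ℝ} :
    (Aᵀ * A).trace = 0 ↔ A = 0 := by
  simpa using trace_conjTranspose_mul_self_eq_zero_iff (A := A)

variable [DecidableEq n]

theorem exp_of_isDiag {M : Matrix n n ℝ} (h : M.IsDiag) :
    NormedSpace.exp M = diagonal fun i => Real.exp (M i i) := by
  conv_lhs => rw [← h.diagonal_diag]
  rw [exp_diagonal, Pi.exp_def, ← Real.exp_eq_exp_ℝ]
  rfl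

theorem trace_mul_diagonal {R : Type*} [CommRing R] (M : Matrix n n R) (v : n → R) :
    (M * diagonal v).trace = ∑ i, M i i * v i := by
  simp [trace, mul_diagonal]

end Matrix

namespace HasDerivWithinAt

variable {m n : Type*} [Fintype m] [Fintype n] {s : Set ℝ} {t : ℝ}

theorem matrix_transpose {A : ℝ → Matrix m n ℝ} {A' : Matrix m n ℝ}
    (h : HasDerivWithinAt A A' s t) : HasDerivWithinAt (fun x ↦ (A x)ᵀ) A'ᵀ s t :=
  (transposeLinearEquiv m n ℝ ℝ).toLinearMap.toContinuousLinearMap.hasFDerivAt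
    |>.comp_hasDerivWithinAt t h

theorem matrix_trace {A : ℝ → Matrix n n ℝ} {A' : Matrix n n ℝ}
    (h : HasDerivWithinAt A A' s t) : HasDerivWithinAt (fun x ↦ (A x).trace) A'.trace s t :=
  (traceLinearMap n ℝ ℝ).toContinuousLinearMap.hasFDerivAt.comp_hasDerivWithinAt t h

variable [DecidableEq n]

theorem trace_transpose_mul_self {A : ℝ → Matrix n n ℝ} {A' : Matrix n n ℝ}
    (h : HasDerivWithinAt A A' s t) :
    HasDerivWithinAt (fun x ↦ ((A x)ᵀ * A x).trace) (2 * ((A t)ᵀ * A').trace) s t := by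
  have hmul := HasDerivWithinAt.fun_mul h.matrix_transpose h
  refine hmul.matrix_trace.congr_deriv ?_
  rw [trace_add, ← trace_transpose (A'ᵀ * A t), transpose_mul, transpose_transpose, two_mul]

theorem transpose_mul_mul {O E : ℝ → Matrix n n ℝ} {O' E' : Matrix n n ℝ}
    (hO : HasDerivWithinAt O O' s t) (hE : HasDerivWithinAt E E' s t) :
    HasDerivWithinAt (fun x ↦ (O x)ᵀ * E x * O x)
      (O'ᵀ * E t * O t + (O t)ᵀ * E' * O t + (O t)ᵀ * E t * O') s t := by
  have hmul := HasDerivWithinAt.fun_mul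
    (HasDerivWithinAt.fun_mul hO.matrix_transpose hE) hO
  exact hmul.congr_deriv (by rw [Matrix.add_mul])

theorem matrix_exp_of_isDiag {L : ℝ → Matrix n n ℝ} {L' : Matrix n n ℝ}
    (hdiag : ∀ x ∈ s, (L x).IsDiag) (ht : t ∈ s) (h : HasDerivWithinAt L L' s t) :
    HasDerivWithinAt (fun x ↦ NormedSpace.exp (L x))
      (NormedSpace.exp (L t) * diagonal L'.diag) s t := by
  have hdiagL : HasDerivWithinAt (fun x ↦ (L x).diag) L'.diag s t :=
    (diagLinearMap n ℝ ℝ).toContinuousLinearMap.hasFDerivAt.comp_hasDerivWithinAt t h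
  have hexp : HasDerivWithinAt (fun x i ↦ Real.exp (L x i i))
      (fun i ↦ Real.exp (L t i i) * L' i i) s t :=
    hasDerivWithinAt_pi.2 fun i ↦ (hasDerivWithinAt_pi.1 hdiagL i).exp
  have hdiagonal :=
    (diagonalLinearMap n ℝ ℝ).toContinuousLinearMap.hasFDerivAt.comp_hasDerivWithinAt t hexp
  rw [exp_of_isDiag (hdiag t ht), diagonal_mul_diagonal]
  exact hdiagonal.congr_of_mem (fun x hx ↦ exp_of_isDiag (hdiag x hx)) ht

end HasDerivWithinAt

open Set in
theorem Matrix.eq_zero_of_trace_transpose_mul_deriv_nonpos {n : Type*} [Fintype n] [DecidableEq n]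
    {A A' : ℝ → Matrix n n ℝ} {a : ℝ}
    (hA : ∀ t ∈ Ici a, HasDerivWithinAt A (A' t) (Ici a) t)
    (hA' : ∀ t ∈ Ici a, ((A t)ᵀ * A' t).trace ≤ 0) (ha : A a = 0) :
    ∀ t ∈ Ici a, A t = 0 := by
  set V : ℝ → ℝ := fun t ↦ ((A t)ᵀ * A t).trace
  have hV : ∀ t ∈ Ici a, HasDerivWithinAt V (2 * ((A t)ᵀ * A' t).trace) (Ici a) t :=
    fun t ht ↦ (hA t ht).trace_transpose_mul_self
  have hanti : AntitoneOn V (Ici a) :=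
    antitoneOn_of_hasDerivWithinAt_nonpos (convex_Ici a)
      (fun t ht ↦ (hV t ht).continuousWithinAt)
      (fun t ht ↦ (hV t (interior_subset ht)).mono interior_subset)
      (fun t ht ↦ by linarith [hA' t (interior_subset ht)])
  intro t ht
  refine trace_transpose_mul_self_eq_zero_iff.1 (le_antisymm ?_ (trace_transpose_mul_self_nonneg _))
  calc V t ≤ V a := hanti self_mem_Ici ht ht
    _ = 0 := by simp [V, ha]

section Tracker

variable {n : Type*} [Fintype n] {K KU O L X B1 B2 U Ω : Matrix n n ℝ}

theorem tracker_rotation_term_nonneg (𝒦 : Matrix n n ℝ →ₗ[ℝ] Matrix n n ℝ)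
    (h𝒦skew : ∀ A : Matrix n n ℝ, Aᵀ = -A → (𝒦 A)ᵀ = -(𝒦 A))
    (h𝒦psd : ∀ A : Matrix n n ℝ, 0 ≤ (Aᵀ * 𝒦 A).trace)
    (hK : K.IsSymm) (hX : X.IsSymm) (hB2 : B2 = X * Kᵀ - Kᵀ * X)
    (hΩ : Ω = 𝒦 ((1 / 2 : ℝ) • (B2 - B2ᵀ))) :
    0 ≤ ((K - X) * (Ωᵀ * X + X * Ω)).trace := by
  have hB2skew : B2ᵀ = -B2 := by
    rw [hB2, transpose_sub, transpose_mul, transpose_mul, transpose_transpose, hK.eq, hX.eq]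
    abel
  have hΩB2 : Ω = 𝒦 B2 := by
    rw [hΩ, hB2skew, sub_neg_eq_add, ← two_smul ℝ, smul_smul]
    norm_num
  have hcomm : (K - X) * X - X * (K - X) = B2ᵀ := by
    rw [hB2skew, hB2, hK.eq, Matrix.sub_mul, Matrix.mul_sub]
    abel
  rw [trace_mul_transpose_mul_add_mul_mul_of_skew (hΩB2 ▸ h𝒦skew B2 hB2skew), hcomm, hΩB2]
  exact h𝒦psd B2

variable [DecidableEq n]

theorem tracker_diagonal_term_eq (hO : O * Oᵀ = 1) (hL : L.IsDiag)
    (hX : X = Oᵀ * NormedSpace.exp L * O) (hB1 : B1 = NormedSpace.exp L - O * K * Oᵀ)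
    (hU : U = -(KU * NormedSpace.exp (-L) * diagonal B1.diag)) :
    ((K - X) * (Oᵀ * (NormedSpace.exp L * diagonal U.diag) * O)).trace
      = ∑ i, KU i i * B1 i i ^ 2 := by
  have hconj : O * (K - X) * Oᵀ = -B1 := by
    rw [hX, hB1, Matrix.mul_sub, Matrix.sub_mul, neg_sub]
    simp only [Matrix.mul_assoc, ← Matrix.mul_assoc O Oᵀ, hO, Matrix.one_mul, Matrix.mul_one]
  have hU_diag : ∀ i, U i i = -(KU i i * Real.exp (-L i i) * B1 i i) := by
    intro i
    rw [hU, exp_of_isDiag hL.neg, neg_apply, mul_diagonal, mul_diagonal]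
    rfl
  calc ((K - X) * (Oᵀ * (NormedSpace.exp L * diagonal U.diag) * O)).trace
      = (O * (K - X) * Oᵀ * (NormedSpace.exp L * diagonal U.diag)).trace := by
        rw [← Matrix.mul_assoc, trace_mul_comm]
        simp only [Matrix.mul_assoc]
    _ = ∑ i, -B1 i i * (Real.exp (L i i) * U i i) := by
        rw [hconj, exp_of_isDiag hL, diagonal_mul_diagonal, trace_mul_diagonal]
        rfl
    _ = ∑ i, KU i i * B1 i i ^ 2 := by
        refine Finset.sum_congr rfl fun i _ ↦ ?_
        rw [hU_diag, Real.exp_neg]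
        field_simp

theorem tracker_rate_nonneg (𝒦 : Matrix n n ℝ →ₗ[ℝ] Matrix n n ℝ)
    (h𝒦skew : ∀ A : Matrix n n ℝ, Aᵀ = -A → (𝒦 A)ᵀ = -(𝒦 A))
    (h𝒦psd : ∀ A : Matrix n n ℝ, 0 ≤ (Aᵀ * 𝒦 A).trace)
    (hK : K.IsSymm) (hKU : ∀ i, 0 ≤ KU i i) (hO : O * Oᵀ = 1) (hL : L.IsDiag)
    (hX : X = Oᵀ * NormedSpace.exp L * O) (hB1 : B1 = NormedSpace.exp L - O * K * Oᵀ)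
    (hB2 : B2 = X * Kᵀ - Kᵀ * X) (hU : U = -(KU * NormedSpace.exp (-L) * diagonal B1.diag))
    (hΩ : Ω = 𝒦 ((1 / 2 : ℝ) • (B2 - B2ᵀ))) :
    0 ≤ ((K - X)ᵀ *
      (Ωᵀ * X + Oᵀ * (NormedSpace.exp L * diagonal U.diag) * O + X * Ω)).trace := by
  have hXsymm : X.IsSymm := by
    rw [IsSymm, hX, transpose_mul, transpose_mul, transpose_transpose,
      (exp_of_isDiag hL ▸ isSymm_diagonal _ : (NormedSpace.exp L).IsSymm).eq, Matrix.mul_assoc]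
  rw [(hK.sub hXsymm).eq, add_right_comm, Matrix.mul_add, trace_add,
    tracker_diagonal_term_eq hO hL hX hB1 hU]
  exact add_nonneg (tracker_rotation_term_nonneg 𝒦 h𝒦skew h𝒦psd hK hXsymm hB2 hΩ)
    (Finset.sum_nonneg fun i _ ↦ mul_nonneg (hKU i) (sq_nonneg _))

end Tracker

theorem stmt_14_general (m : ℕ)
    (Kstar : Matrix (Fin m) (Fin m) ℝ) (hKsymm : Kstar.IsSymm)
    (KU : Matrix (Fin m) (Fin m) ℝ) (hKUpos : ∀ i, 0 ≤ KU i i)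
    (𝒦 : Matrix (Fin m) (Fin m) ℝ →ₗ[ℝ] Matrix (Fin m) (Fin m) ℝ)
    (h𝒦skew : ∀ A : Matrix (Fin m) (Fin m) ℝ, Aᵀ = -A → (𝒦 A)ᵀ = -(𝒦 A))
    (h𝒦psd : ∀ A : Matrix (Fin m) (Fin m) ℝ, 0 ≤ (Aᵀ * 𝒦 A).trace)
    (O L X B1 B2 U Ω : ℝ → Matrix (Fin m) (Fin m) ℝ)
    (hLdiag : ∀ t ∈ Set.Ici (0 : ℝ), (L t).IsDiag)
    (hOorth : ∀ t ∈ Set.Ici (0 : ℝ), O t * (O t)ᵀ = 1)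
    (hX : ∀ t, X t = (O t)ᵀ * NormedSpace.exp (L t) * O t)
    (hB1 : ∀ t, B1 t = NormedSpace.exp (L t) - O t * Kstar * (O t)ᵀ)
    (hB2 : ∀ t, B2 t = X t * Kstarᵀ - Kstarᵀ * X t)
    (hU : ∀ t, U t = -(KU * NormedSpace.exp (-L t) * Matrix.diagonal (B1 t).diag))
    (hΩ : ∀ t, Ω t = 𝒦 ((1 / 2 : ℝ) • (B2 t - (B2 t)ᵀ)))
    (hL : ∀ t ∈ Set.Ici (0 : ℝ), HasDerivWithinAt L (U t) (Set.Ici (0 : ℝ)) t)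
    (hO : ∀ t ∈ Set.Ici (0 : ℝ), HasDerivWithinAt O (O t * Ω t) (Set.Ici (0 : ℝ)) t)
    (hX0 : X 0 = Kstar) :
    ∀ t ∈ Set.Ici (0 : ℝ), X t = Kstar := by
  have hvel : ∀ t ∈ Set.Ici (0 : ℝ), HasDerivWithinAt X ((Ω t)ᵀ * X t
      + (O t)ᵀ * (NormedSpace.exp (L t) * diagonal (U t).diag) * O t + X t * Ω t)
      (Set.Ici 0) t := by
    intro t ht
    rw [funext hX]
    refine ((hO t ht).transpose_mul_mul ((hL t ht).matrix_exp_of_isDiag hLdiag ht)).congr_deriv ?_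
    simp only [transpose_mul, Matrix.mul_assoc]
  have herror : ∀ t ∈ Set.Ici (0 : ℝ), Kstar - X t = 0 := by
    refine eq_zero_of_trace_transpose_mul_deriv_nonpos (A := fun t ↦ Kstar - X t)
      (fun t ht ↦ (hvel t ht).const_sub Kstar) (fun t ht ↦ ?_) (sub_eq_zero.2 hX0.symm)
    rw [Matrix.mul_neg, trace_neg, neg_nonpos]
    exact tracker_rate_nonneg 𝒦 h𝒦skew h𝒦psd hKsymm hKUpos (hOorth t ht) (hLdiag t ht) (hX t)
      (hB1 t) (hB2 t) (hU t) (hΩ t)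
  exact fun t ht ↦ (sub_eq_zero.1 (herror t ht)).symm

/-- if `K*` is symmetric and `X(0) = K*`, then along the tracker
dynamics `X(t) = K*` for all `t ≥ 0`; the equilibrium `K* - X = 0` is invariant. -/
theorem stmt_14 (m : ℕ) (hm : 0 < m)
    (Kstar : Matrix (Fin m) (Fin m) ℝ) (hKsymm : Kstar.IsSymm)
    (KU : Matrix (Fin m) (Fin m) ℝ) (hKU : KU.IsDiag) (hKUpos : ∀ i, 0 ≤ KU i i)
    (𝒦 : Matrix (Fin m) (Fin m) ℝ →ₗ[ℝ] Matrix (Fin m) (Fin m) ℝ)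
    (h𝒦skew : ∀ A : Matrix (Fin m) (Fin m) ℝ, Aᵀ = -A → (𝒦 A)ᵀ = -(𝒦 A))
    (h𝒦psd : ∀ A : Matrix (Fin m) (Fin m) ℝ, 0 ≤ (Aᵀ * 𝒦 A).trace)
    (O L X B1 B2 U Ω : ℝ → Matrix (Fin m) (Fin m) ℝ)
    (hLdiag : ∀ t ∈ Set.Ici (0 : ℝ), (L t).IsDiag)
    (hOorth : ∀ t ∈ Set.Ici (0 : ℝ), O t * (O t)ᵀ = 1)
    (hX : ∀ t, X t = (O t)ᵀ * NormedSpace.exp (L t) * O t)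
    (hB1 : ∀ t, B1 t = NormedSpace.exp (L t) - O t * Kstar * (O t)ᵀ)
    (hB2 : ∀ t, B2 t = X t * Kstarᵀ - Kstarᵀ * X t)
    (hU : ∀ t, U t = -(KU * NormedSpace.exp (-L t) * Matrix.diagonal (B1 t).diag))
    (hΩ : ∀ t, Ω t = 𝒦 ((1 / 2 : ℝ) • (B2 t - (B2 t)ᵀ)))
    (hL : ∀ t ∈ Set.Ici (0 : ℝ), HasDerivWithinAt L (U t) (Set.Ici (0 : ℝ)) t)
    (hO : ∀ t ∈ Set.Ici (0 : ℝ), HasDerivWithinAt O (O t * Ω t) (Set.Ici (0 : ℝ)) t)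
    (hX0 : X 0 = Kstar) :
    ∀ t ∈ Set.Ici (0 : ℝ), X t = Kstar :=
  stmt_14_general m Kstar hKsymm KU hKUpos 𝒦 h𝒦skew h𝒦psd O L X B1 B2 U Ω hLdiag hOorth hX hB1 hB2
    hU hΩ hL hO hX0
end
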